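/- Let Q ∈ ℝ^{m×m} be in cascade form (q_{i,j} = 0 for i > j+1, q_{i+1,i} ≠ 0), B = e_1, and let M ∈ ℝ^{m×m} be any matrix whose last two rows are zero. Then the equation (I_m − BBᵀ)(Q X − X Q + M) = 0 admits a solution X ∈ ℝ^{m×m} whose last row is zero; moreover the entries of X in rows 1,...,m−1 can be determined recursively row by row from bottom to top and within each row from right to left, each new entry being obtained by dividing by the corresponding nonzero subdiagonal entry of Q. -/
import Mathlib


open Matrix

noncomputable def auxR (m : ℕ) (Q M : Matrix (Fin m) (Fin m) ℝ) : ℕ → Fin m → ℝ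
  | 0 => fun _ => 0
  | (d+1) => fun k =>
    if h : d + 1 < m then
      have hmd : m - (d+1) < m := by omega
      have hmd1 : m - (d+1) - 1 < m := by omega
      ((∑ j : Fin m, auxR m Q M d j * Q j k) - M ⟨m - (d+1), hmd⟩ k
        - ∑ j : Fin m, if h' : m - (d+1) ≤ (j:ℕ) then
            Q ⟨m - (d+1), hmd⟩ j * auxR m Q M (m - 1 - (j:ℕ)) k else 0)
        / Q ⟨m - (d+1), hmd⟩ ⟨m - (d+1) - 1, hmd1⟩
    else 0
termination_by d => d
decreasing_by
  · omega
  · have := j.isLt; omega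

lemma auxR_row (m : ℕ) (Q M : Matrix (Fin m) (Fin m) ℝ)
    (hcascade : ∀ i j : Fin m, (j : ℕ) + 1 < (i : ℕ) → Q i j = 0)
    (hsub : ∀ i j : Fin m, (i : ℕ) = (j : ℕ) + 1 → Q i j ≠ 0)
    (i k : Fin m) (hi : 1 ≤ (i:ℕ)) :
    (∑ j : Fin m, Q i j * auxR m Q M (m - 1 - (j:ℕ)) k)
      - (∑ j : Fin m, auxR m Q M (m - 1 - (i:ℕ)) j * Q j k) + M i k = 0 := by
  have him := i.isLt
  obtain ⟨d, hd⟩ : ∃ d, m - 1 - (i:ℕ) = d := ⟨_, rfl⟩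
  rw [hd]
  have hd1 : d + 1 < m := by omega
  have hidx : m - (d+1) = (i:ℕ) := by omega
  have hQsub : Q i ⟨(i:ℕ) - 1, by omega⟩ ≠ 0 := hsub _ _ (by simp; omega)
  have hstep : auxR m Q M (d+1) k * Q i ⟨(i:ℕ) - 1, by omega⟩
      = (∑ j : Fin m, auxR m Q M d j * Q j k) - M i k
        - ∑ j : Fin m, if (i:ℕ) ≤ (j:ℕ) then Q i j * auxR m Q M (m-1-(j:ℕ)) k else 0 := by
    rw [show auxR m Q M (d+1) k
        = ((∑ j : Fin m, auxR m Q M d j * Q j k) - M ⟨m - (d+1), by omega⟩ k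
            - ∑ j : Fin m, if m - (d+1) ≤ (j:ℕ) then
                Q ⟨m - (d+1), by omega⟩ j * auxR m Q M (m - 1 - (j:ℕ)) k else 0)
            / Q ⟨m - (d+1), by omega⟩ ⟨m - (d+1) - 1, by omega⟩ by
      rw [auxR]; simp only [dif_pos hd1, dite_eq_ite]]
    rw [show (⟨m - (d+1), by omega⟩ : Fin m) = i from Fin.ext hidx]
    rw [show (⟨m - (d+1) - 1, by omega⟩ : Fin m) = ⟨(i:ℕ) - 1, by omega⟩ from
      Fin.ext (by simp only [Fin.val_mk]; omega)]
    rw [div_mul_cancel₀ _ hQsub]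
    simp only [hidx]
  have hsplit : ∀ j : Fin m, Q i j * auxR m Q M (m-1-(j:ℕ)) k
      = (if (i:ℕ) ≤ (j:ℕ) then Q i j * auxR m Q M (m-1-(j:ℕ)) k else 0)
        + (if j = (⟨(i:ℕ)-1, by omega⟩ : Fin m) then Q i j * auxR m Q M (m-1-(j:ℕ)) k else 0) := by
    intro j
    rcases lt_trichotomy ((j:ℕ)+1) (i:ℕ) with h|h|h
    · rw [if_neg (by omega), if_neg (by rw [Fin.ext_iff]; simp only [Fin.val_mk]; omega),
        hcascade i j h]; ring
    · rw [if_neg (by omega), if_pos (Fin.ext (by simp only [Fin.val_mk]; omega))]; ring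
    · rw [if_pos (by omega), if_neg (by rw [Fin.ext_iff]; simp only [Fin.val_mk]; omega)]; ring
  have hsum : (∑ j : Fin m, Q i j * auxR m Q M (m-1-(j:ℕ)) k)
      = (∑ j : Fin m, if (i:ℕ) ≤ (j:ℕ) then Q i j * auxR m Q M (m-1-(j:ℕ)) k else 0)
        + Q i ⟨(i:ℕ)-1, by omega⟩ * auxR m Q M (d+1) k := by
    rw [Finset.sum_congr rfl fun j _ => hsplit j, Finset.sum_add_distrib]
    congr 1
    rw [Finset.sum_ite_eq' Finset.univ (⟨(i:ℕ)-1, by omega⟩ : Fin m)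
      (fun j => Q i j * auxR m Q M (m-1-(j:ℕ)) k), if_pos (Finset.mem_univ _)]
    congr 2
    simp only [Fin.val_mk]; omega
  rw [hsum]
  linear_combination hstep

/-- for cascade `Q` and any `M` whose last two rows vanish,
the projected Sylvester equation `(I − BBᵀ)(QX − XQ + M) = 0` has a
solution `X` with zero last row. -/
theorem stmt10 (m : ℕ) (hm : 0 < m) (Q : Matrix (Fin m) (Fin m) ℝ)
    (hcascade : ∀ i j : Fin m, (j : ℕ) + 1 < (i : ℕ) → Q i j = 0)
    (hsub : ∀ i j : Fin m, (i : ℕ) = (j : ℕ) + 1 → Q i j ≠ 0)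
    (B : Matrix (Fin m) (Fin 1) ℝ)
    (hB : ∀ i : Fin m, B i 0 = if (i : ℕ) = 0 then 1 else 0)
    (M : Matrix (Fin m) (Fin m) ℝ)
    (hM : ∀ i j : Fin m, m - 2 ≤ (i : ℕ) → M i j = 0) :
    ∃ X : Matrix (Fin m) (Fin m) ℝ,
      (∀ j : Fin m, X ⟨m - 1, by omega⟩ j = 0) ∧
      ((1 : Matrix (Fin m) (Fin m) ℝ) - B * Bᵀ) * (Q * X - X * Q + M) = 0 := by
  classical
  refine ⟨Matrix.of (fun i k => auxR m Q M (m - 1 - (i:ℕ)) k), ?_, ?_⟩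
  · intro j
    show auxR m Q M (m - 1 - (m - 1)) j = 0
    rw [Nat.sub_self, auxR]
  · set X : Matrix (Fin m) (Fin m) ℝ :=
      Matrix.of (fun i k => auxR m Q M (m - 1 - (i:ℕ)) k) with hX
    set A : Matrix (Fin m) (Fin m) ℝ := Q * X - X * Q + M with hA
    have key : ∀ (i k : Fin m), 1 ≤ (i:ℕ) → A i k = 0 := by
      intro i k hi
      rw [hA, Matrix.add_apply, Matrix.sub_apply, Matrix.mul_apply, Matrix.mul_apply]
      have h := auxR_row m Q M hcascade hsub i k hi
      simpa [hX] using h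
    ext i k
    rw [Matrix.sub_mul, Matrix.one_mul, Matrix.sub_apply, Matrix.zero_apply,
      Matrix.mul_apply]
    have h1 : ∀ l : Fin m, (B * Bᵀ) i l = B i 0 * B l 0 := by
      intro l; simp [Matrix.mul_apply]
    have h2 : (∑ l : Fin m, (B * Bᵀ) i l * A l k) = B i 0 * A ⟨0, hm⟩ k := by
      calc (∑ l : Fin m, (B * Bᵀ) i l * A l k)
          = ∑ l : Fin m, B i 0 * (if l = (⟨0, hm⟩ : Fin m) then A l k else 0) := by
            refine Finset.sum_congr rfl fun l _ => ?_
            rw [h1, hB l]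
            by_cases hl : (l:ℕ) = 0
            · rw [if_pos hl, if_pos (Fin.ext (by simpa using hl))]; ring
            · rw [if_neg hl, if_neg (by rw [Fin.ext_iff]; simpa using hl)]; ring
        _ = B i 0 * A ⟨0, hm⟩ k := by
            rw [← Finset.mul_sum, Finset.sum_ite_eq' Finset.univ (⟨0, hm⟩ : Fin m)
              (fun l => A l k), if_pos (Finset.mem_univ _)]
    rw [h2, hB i]
    by_cases hi : (i:ℕ) = 0
    · rw [if_pos hi, one_mul, show i = (⟨0, hm⟩ : Fin m) from Fin.ext (by simpa using hi),
        sub_self]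
    · rw [if_neg hi, zero_mul, sub_zero]
      exact key i k (by omega)
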